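/- arXiv:2601.04753 — 2 statements merged into one kernel-verified Lean document; each statement's English description precedes it below -/
import Mathlib

section
/- Let w : B₁ → ℝ² ≅ ℂ be Lipschitz and solve ∂_{z̄}w = h(∂_z w) a.e. in B₁ ⊂ ℝ², where h : F → ℂ and F ⊆ ℂ is a compact set containing the essential range [∂_z w]. Then Dw ∈ K a.e. in B₁, where K = { the matrix with conformal part a and anticonformal part h(a) : a ∈ F } ⊆ ℝ^{2×2}. If moreover h is strictly contractive, i.e. |h(a) − h(b)| ≤ (1 − σ̃(|a − b|))|a − b| for all a, b ∈ F with σ̃ : [0,∞) → [0,1] nondecreasing and σ̃(t) > 0 for t > 0, then K is elliptic-with-modulus. Conversely, if w : B₁ → ℝ² is Lipschitz with Dw ∈ K a.e. for a compact elliptic-with-modulus K, then there exists a strictly contractive h : [K]_H → ℂ (where [K]_H = { [X]_H : X ∈ K }) such that ∂_{z̄}w = h(∂_z w) a.e. in B₁. -/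
open MeasureTheory Metric Set Filter
open scoped Topology NNReal ENNReal RealInnerProductSpace

noncomputable section

/-- The plane `ℝ²` with the Euclidean norm. -/
abbrev E2 := EuclideanSpace ℝ (Fin 2)

/-- The space of real `2×2` matrices. -/
abbrev M2 := Matrix (Fin 2) (Fin 2) ℝ

/-- The open unit ball `B₁ ⊆ ℝ²`. -/
def B1 : Set E2 := Metric.ball 0 1

/-- The `j`-th standard basis vector of `ℝ²`. -/
def e2 (j : Fin 2) : E2 := EuclideanSpace.single j 1

/-- The vector `(s, t) ∈ ℝ²`. -/
def mkE2 (s t : ℝ) : E2 := (WithLp.equiv 2 (Fin 2 → ℝ)).symm ![s, t]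

/-- The total derivative of `w : ℝ² → ℝ²` at `x`, as a `2×2` matrix (row `i`, column `j`
gives `∂_j w_i`); junk value where `w` is not differentiable. -/
def Dmat (w : E2 → E2) (x : E2) : M2 := Matrix.of fun i j => fderiv ℝ w x (e2 j) i

/-- The Euclidean (Frobenius) norm of a `2×2` matrix. -/
def matNorm (A : M2) : ℝ := Real.sqrt (∑ i, ∑ j, (A i j) ^ 2)

/-- An admissible modulus: `σ : [0,∞) → [0,∞)` continuous, strictly increasing, convex,
with `σ 0 = 0`. -/
def IsAdmissibleModulus (σ : ℝ → ℝ) : Prop :=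
  ContinuousOn σ (Set.Ici 0) ∧ StrictMonoOn σ (Set.Ici 0) ∧ ConvexOn ℝ (Set.Ici 0) σ ∧
    σ 0 = 0 ∧ ∀ t ∈ Set.Ici (0 : ℝ), 0 ≤ σ t

/-- `K ⊆ ℝ^{2×2}` is elliptic with a modulus: `σ(|X − Y|) ≤ det (X − Y)` for all `X, Y ∈ K`,
for some admissible modulus `σ`. -/
def EllipticWithModulus (K : Set M2) : Prop :=
  ∃ σ : ℝ → ℝ, IsAdmissibleModulus σ ∧ ∀ X ∈ K, ∀ Y ∈ K, σ (matNorm (X - Y)) ≤ (X - Y).det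

/-- `w` solves the differential inclusion `Dw ∈ K` a.e. in `Ω`. -/
def SolvesDI (w : E2 → E2) (K : Set M2) (Ω : Set E2) : Prop :=
  ∀ᵐ x ∂(volume.restrict Ω), DifferentiableAt ℝ w x ∧ Dmat w x ∈ K

/-- The essential range of `f` on `s`: the smallest closed set containing `f x` for
a.e. `x ∈ s`. -/
def essRange {α : Type*} [TopologicalSpace α] (f : E2 → α) (s : Set E2) : Set α :=
  ⋂₀ {F : Set α | IsClosed F ∧ ∀ᵐ x ∂(volume.restrict s), f x ∈ F}

/-- The essential range of `f` at the point `x₀`, relative to `Ω`: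
`[f](x₀) = ⋂_{r>0} [f](B_r(x₀) ∩ Ω)`. -/
def essRangeAt {α : Type*} [TopologicalSpace α] (f : E2 → α) (Ω : Set E2) (x₀ : E2) : Set α :=
  ⋂ r ∈ Set.Ioi (0 : ℝ), essRange f (Metric.ball x₀ r ∩ Ω)

/-- The conformal part `[A]_H = ((a+d) + i(c−b))/2` of a matrix `A = [[a,b],[c,d]]`. -/
def confPart (A : M2) : ℂ := ⟨(A 0 0 + A 1 1) / 2, (A 1 0 - A 0 1) / 2⟩

/-- The anticonformal part `[A]_{H̄} = ((a−d) + i(c+b))/2` of a matrix `A = [[a,b],[c,d]]`. -/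
def anticonfPart (A : M2) : ℂ := ⟨(A 0 0 - A 1 1) / 2, (A 1 0 + A 0 1) / 2⟩

/-- A smooth test function compactly supported in `Ω`. -/
def IsTestFun (φ : E2 → ℝ) (Ω : Set E2) : Prop :=
  ContDiff ℝ (⊤ : ℕ∞) φ ∧ HasCompactSupport φ ∧ tsupport φ ⊆ Ω

/-- `u` is a distributional solution of `div (G (∇u)) = 0` in `Ω`. -/
def IsDivSol (G : E2 → E2) (u : E2 → ℝ) (Ω : Set E2) : Prop :=
  ∀ φ : E2 → ℝ, IsTestFun φ Ω → ∫ x in Ω, ⟪G (gradient u x), gradient φ x⟫ = 0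

/-- The rescaling `h ↦ (w (x₀ + r h) − w x₀)/r`. -/
def rescale (w : E2 → E2) (x₀ : E2) (r : ℝ) : E2 → E2 :=
  fun h => r⁻¹ • (w (x₀ + r • h) - w x₀)

/-- `W` is a blowup limit of `w` at `x₀`: a locally uniform limit on `ℝ²` of rescalings
along some sequence `r_j → 0⁺`. -/
def IsBlowup (w : E2 → E2) (x₀ : E2) (W : E2 → E2) : Prop :=
  ∃ r : ℕ → ℝ, (∀ j, 0 < r j) ∧ Tendsto r atTop (𝓝 0) ∧
    TendstoLocallyUniformly (fun j => rescale w x₀ (r j)) W atTop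

/-- The regular set of `w` in `Ω`: points at which some blowup limit is differentiable at `0`. -/
def RegSet (w : E2 → E2) (Ω : Set E2) : Set E2 :=
  {x | x ∈ Ω ∧ ∃ W : E2 → E2, IsBlowup w x W ∧ DifferentiableAt ℝ W 0}

/-- The singular set `Sing(w) = Ω \ Reg(w)`. -/
def SingSet (w : E2 → E2) (Ω : Set E2) : Set E2 := Ω \ RegSet w Ω

/-- `S` is locally finite in `Ω`. -/
def LocallyFiniteIn (S Ω : Set E2) : Prop := ∀ x ∈ Ω, ∃ U ∈ 𝓝 x, (S ∩ U).Finite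

/-- A bounded open strictly convex subset of the plane: convex, and the boundary contains
no nondegenerate segment. -/
def IsStrictlyConvexOpen (C : Set E2) : Prop :=
  IsOpen C ∧ Convex ℝ C ∧
    ∀ x ∈ frontier C, ∀ y ∈ frontier C, x ≠ y → ¬ segment ℝ x y ⊆ frontier C

/-- The projection `aM = (a₁M₁₁ + a₂M₂₁, a₁M₁₂ + a₂M₂₂)` of a matrix. -/
def rowProj (a : E2) (A : M2) : E2 :=
  mkE2 (a 0 * A 0 0 + a 1 * A 1 0) (a 0 * A 0 1 + a 1 * A 1 1)

/-- `J g` where `J = [[0,1],[−1,0]]` is the rotation by `−π/2`. -/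
def Jvec (g : E2) : E2 := mkE2 (g 1) (-(g 0))

/-- Second derivative (Hessian) entries of a scalar function. -/
def hess (φ : E2 → ℝ) (x : E2) (i j : Fin 2) : ℝ :=
  fderiv ℝ (fun y => fderiv ℝ φ y (e2 j)) x (e2 i)

/-- The matrix with rows `r₀` and `r₁`. -/
def rowsMat (r₀ r₁ : E2) : M2 := Matrix.of ![![r₀ 0, r₀ 1], ![r₁ 0, r₁ 1]]

/-- Entrywise derivative of a curve of matrices. -/
def gdot (γ : ℝ → M2) (t : ℝ) : M2 := Matrix.of fun i j => deriv (fun s => γ s i j) t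

/-- The cofactor matrix of a `2×2` matrix. -/
def cof2 (A : M2) : M2 := Matrix.of ![![A 1 1, -(A 1 0)], ![-(A 0 1), A 0 0]]

/-- `Γ ⊆ ℝ^{2×2}` is a compact connected one-dimensional `C¹` curve (possibly with
boundary): either parametrized injectively by a nondegenerate compact interval or a closed
curve parametrized by `ℝ/Lℤ`, with a nowhere vanishing derivative. -/
def IsC1Curve (Γ : Set M2) : Prop :=
  ∃ γ : ℝ → M2, (∀ i j, ContDiff ℝ 1 fun t => γ t i j) ∧
    ((∃ a b : ℝ, a < b ∧ Set.InjOn γ (Set.Icc a b) ∧ Γ = γ '' Set.Icc a b ∧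
        ∀ t ∈ Set.Icc a b, gdot γ t ≠ 0) ∨
     (∃ L : ℝ, 0 < L ∧ (∀ t, γ (t + L) = γ t) ∧ Set.InjOn γ (Set.Ico 0 L) ∧
        Γ = γ '' Set.univ ∧ ∀ t : ℝ, gdot γ t ≠ 0))

/-- The set `𝒟₋` where ellipticity of `G` degenerates from below. -/
def Dminus (G : E2 → E2) : Set E2 :=
  ⋂ lam ∈ Set.Ioi (0 : ℝ), closure
    {x | Filter.liminf
        (fun h : E2 => ((⟪G (x + h) - G x, h⟫ / ‖h‖ ^ 2 : ℝ) : EReal)) (𝓝[≠] 0)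
      ≤ (lam : EReal)}

/-- The set `𝒟₊` where ellipticity of `G` degenerates from above. -/
def Dplus (G : E2 → E2) : Set E2 :=
  ⋂ lam ∈ Set.Ioi (0 : ℝ), closure
    {x | Filter.liminf
        (fun h : E2 => ((⟪G (x + h) - G x, h⟫ / ‖G (x + h) - G x‖ ^ 2 : ℝ) : EReal)) (𝓝[≠] 0)
      ≤ (lam : EReal)}

/-- The degeneracy set `𝒟 = 𝒟₋ ∩ 𝒟₊`. -/
def Ddeg (G : E2 → E2) : Set E2 := Dminus G ∩ Dplus G

/-- `h` is strictly contractive on `S`. -/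
def StrictlyContractiveOn (h : ℂ → ℂ) (S : Set ℂ) : Prop :=
  ∃ σ' : ℝ → ℝ, MonotoneOn σ' (Set.Ici 0) ∧ (∀ t ∈ Set.Ici (0 : ℝ), σ' t ∈ Set.Icc (0 : ℝ) 1) ∧
    (∀ t : ℝ, 0 < t → 0 < σ' t) ∧
    ∀ a ∈ S, ∀ b ∈ S, ‖h a - h b‖ ≤ (1 - σ' ‖a - b‖) * ‖a - b‖

/-- The matrix with conformal part `a` and anticonformal part `b`. -/
def matOfConf (a b : ℂ) : M2 :=
  Matrix.of ![![a.re + b.re, -a.im + b.im], ![a.im + b.im, a.re - b.re]]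

/-- Diameter of a set of matrices with respect to the Euclidean (Frobenius) norm. -/
def mdiam (S : Set M2) : ℝ := sSup (Set.image2 (fun X Y => matNorm (X - Y)) S S)

/-- The pair map `x ↦ (u x, v x) : ℝ² → ℝ²`. -/
def pairFun (u v : E2 → ℝ) : E2 → E2 := fun x => mkE2 (u x) (v x)

/-- The Monge–Ampère pairing
`𝒟(u,v)(φ) = −(1/4) ∫_Ω ⟨ J∇u ⊗ J∇v + J∇v ⊗ J∇u , D²φ ⟩`. -/
def MApair (u v : E2 → ℝ) (Ω : Set E2) (φ : E2 → ℝ) : ℝ :=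
  -(1 / 4) * ∫ x in Ω, ∑ i, ∑ j,
    (Jvec (gradient u x) i * Jvec (gradient v x) j
      + Jvec (gradient v x) i * Jvec (gradient u x) j) * hess φ x i j

/-- The set `K` given by the graph of `h` over `F`, in conformal coordinates. -/
def KofH (h : ℂ → ℂ) (F : Set ℂ) : Set M2 := {A | ∃ a ∈ F, A = matOfConf a (h a)}


section Aux
variable {a b : ℂ} {A : M2}

lemma normC (z : ℂ) : ‖z‖^2 = z.re^2 + z.im^2 := by
  rw [Complex.sq_norm, Complex.normSq_apply]; ring

lemma confPart_matOfConf (a b : ℂ) : confPart (matOfConf a b) = a := by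
  apply Complex.ext <;> simp [confPart, matOfConf] <;> ring

lemma anticonfPart_matOfConf (a b : ℂ) : anticonfPart (matOfConf a b) = b := by
  apply Complex.ext <;> simp [anticonfPart, matOfConf] <;> ring

lemma matOfConf_self (A : M2) : matOfConf (confPart A) (anticonfPart A) = A := by
  ext i j
  fin_cases i <;> fin_cases j <;> simp [matOfConf, confPart, anticonfPart] <;> ring

lemma confPart_sub (A B : M2) : confPart (A - B) = confPart A - confPart B := by
  apply Complex.ext <;> simp [confPart, Matrix.sub_apply] <;> ring

lemma anticonfPart_sub (A B : M2) : anticonfPart (A - B) = anticonfPart A - anticonfPart B := by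
  apply Complex.ext <;> simp [anticonfPart, Matrix.sub_apply] <;> ring

lemma det_eq_conf (A : M2) : A.det = ‖confPart A‖^2 - ‖anticonfPart A‖^2 := by
  rw [Matrix.det_fin_two, normC, normC]
  simp [confPart, anticonfPart]; ring

lemma sum_sq_eq (A : M2) : (∑ i, ∑ j, (A i j)^2) = 2*(‖confPart A‖^2 + ‖anticonfPart A‖^2) := by
  rw [normC, normC]
  simp [Fin.sum_univ_two, confPart, anticonfPart]; ring

lemma matNorm_eq (A : M2) :
    matNorm A = Real.sqrt (2*(‖confPart A‖^2 + ‖anticonfPart A‖^2)) := by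
  rw [matNorm, sum_sq_eq]

lemma matNorm_nonneg (A : M2) : 0 ≤ matNorm A := Real.sqrt_nonneg _

lemma conf_le_matNorm (A : M2) : ‖confPart A‖ ≤ matNorm A := by
  rw [matNorm_eq]
  calc ‖confPart A‖ = Real.sqrt (‖confPart A‖^2) := (Real.sqrt_sq (norm_nonneg _)).symm
    _ ≤ _ := by
        apply Real.sqrt_le_sqrt; nlinarith [sq_nonneg ‖anticonfPart A‖, sq_nonneg ‖confPart A‖]

lemma matOfConf_sub (a b a' b' : ℂ) :
    matOfConf a b - matOfConf a' b' = matOfConf (a - a') (b - b') := by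
  ext i j
  fin_cases i <;> fin_cases j <;> simp [matOfConf, Matrix.sub_apply] <;> ring

end Aux

lemma ae_mem_essRange {α : Type*} [TopologicalSpace α] [SecondCountableTopology α]
    (f : E2 → α) (s : Set E2) : ∀ᵐ x ∂(volume.restrict s), f x ∈ essRange f s := by
  set μ := volume.restrict s with hμ
  obtain ⟨B, hBc, -, hBbasis⟩ := TopologicalSpace.exists_countable_basis α
  rw [MeasureTheory.ae_iff]
  apply measure_mono_null (t := ⋃ U ∈ {U ∈ B | μ (f ⁻¹' U) = 0}, f ⁻¹' U)
  · intro x hx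
    simp only [Set.mem_setOf_eq, essRange, Set.mem_sInter] at hx
    push_neg at hx
    obtain ⟨G, ⟨hGc, hGae⟩, hxG⟩ := hx
    obtain ⟨U, hUB, hxU, hUF⟩ := hBbasis.exists_subset_of_mem_open hxG hGc.isOpen_compl
    have hnull : μ (f ⁻¹' U) = 0 := by
      apply measure_mono_null (Set.preimage_mono hUF)
      rw [MeasureTheory.ae_iff] at hGae
      exact hGae
    exact Set.mem_biUnion ⟨hUB, hnull⟩ hxU
  · rw [measure_biUnion_null_iff (hBc.mono (Set.sep_subset _ _))]
    exact fun U hU => hU.2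

lemma primitive_admissible (ψ : ℝ → ℝ) (hmono : Monotone ψ) (hnn : ∀ u, 0 ≤ ψ u)
    (hpos : ∀ u, 0 < u → 0 < ψ u) :
    IsAdmissibleModulus (fun s => ∫ t in (0:ℝ)..s, ψ t) ∧
    (∀ s : ℝ, 0 ≤ s → (∫ t in (0:ℝ)..s, ψ t) ≤ s * ψ s) := by
  have hint : ∀ a b : ℝ, IntervalIntegrable ψ volume a b := fun a b => hmono.intervalIntegrable
  have hub : ∀ a b : ℝ, a ≤ b → (∫ t in a..b, ψ t) ≤ (b - a) * ψ b := by
    intro a b hab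
    calc (∫ t in a..b, ψ t) ≤ ∫ _t in a..b, ψ b := by
          apply intervalIntegral.integral_mono_on hab (hint a b) intervalIntegrable_const
          intro x hx; exact hmono hx.2
      _ = (b - a) * ψ b := by simp [intervalIntegral.integral_const, smul_eq_mul]
  have hlb : ∀ a b : ℝ, a ≤ b → (b - a) * ψ a ≤ ∫ t in a..b, ψ t := by
    intro a b hab
    calc (b - a) * ψ a = ∫ _t in a..b, ψ a := by simp [intervalIntegral.integral_const, smul_eq_mul]
      _ ≤ ∫ t in a..b, ψ t := by
          apply intervalIntegral.integral_mono_on hab intervalIntegrable_const (hint a b)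
          intro x hx; exact hmono hx.1
  have hsub : ∀ a b : ℝ, (∫ t in (0:ℝ)..b, ψ t) - (∫ t in (0:ℝ)..a, ψ t) = ∫ t in a..b, ψ t :=
    fun a b => intervalIntegral.integral_interval_sub_left (hint 0 b) (hint 0 a)
  have hsm : StrictMonoOn (fun s => ∫ t in (0:ℝ)..s, ψ t) (Set.Ici 0) := by
    intro s hs t _ht hst
    have hm : s < (s + t) / 2 := by linarith
    have hm2 : (s + t) / 2 < t := by linarith
    have h1 : (0:ℝ) < ((s + t) / 2) := lt_of_le_of_lt hs hm
    have key : (0:ℝ) < ∫ u in s..t, ψ u := by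
      rw [← intervalIntegral.integral_add_adjacent_intervals (hint s ((s+t)/2)) (hint ((s+t)/2) t)]
      have i1 : (0:ℝ) ≤ ∫ u in s..((s+t)/2), ψ u := by
        calc (0:ℝ) = ((s+t)/2 - s) * ψ s - ((s+t)/2 - s) * ψ s := by ring
          _ ≤ _ := by nlinarith [hlb s ((s+t)/2) hm.le, hnn s]
      have i2 : (0:ℝ) < ∫ u in ((s+t)/2)..t, ψ u := by
        have := hlb ((s+t)/2) t hm2.le
        nlinarith [hpos ((s+t)/2) h1]
      linarith
    have := hsub s t
    simp only []
    linarith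
  refine ⟨⟨(intervalIntegral.continuous_primitive hint 0).continuousOn, hsm, ?_, by simp, ?_⟩, ?_⟩
  · -- convexity
    apply convexOn_of_slope_mono_adjacent (convex_Ici 0)
    intro x y z hx _hz hxy hyz
    have hxy' : (0:ℝ) < y - x := by linarith
    have hyz' : (0:ℝ) < z - y := by linarith
    have h1 : (∫ t in (0:ℝ)..y, ψ t) - (∫ t in (0:ℝ)..x, ψ t) ≤ (y - x) * ψ y := by
      rw [hsub x y]; exact hub x y hxy.le
    have h2 : (z - y) * ψ y ≤ (∫ t in (0:ℝ)..z, ψ t) - (∫ t in (0:ℝ)..y, ψ t) := by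
      rw [hsub y z]; exact hlb y z hyz.le
    rw [div_le_div_iff₀ hxy' hyz']
    nlinarith
  · -- nonneg
    intro t ht
    exact intervalIntegral.integral_nonneg ht (fun u _ => hnn u)
  · -- upper bound
    intro s hs
    have := hub 0 s hs
    simpa using this

lemma confPart_eq_addI (A : M2) :
    confPart A = ((A 0 0 + A 1 1)/2 : ℝ) + ((A 1 0 - A 0 1)/2 : ℝ) * Complex.I := by
  apply Complex.ext <;> simp [confPart]

lemma continuous_confPart : Continuous (confPart : M2 → ℂ) := by
  have he : ∀ i j : Fin 2, Continuous fun A : M2 => A i j := fun i j =>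
    continuous_id.matrix_elem i j
  simp only [funext confPart_eq_addI]
  exact ((Complex.continuous_ofReal.comp (((he 0 0).add (he 1 1)).div_const 2)).add
    ((Complex.continuous_ofReal.comp (((he 1 0).sub (he 0 1)).div_const 2)).mul
      continuous_const))

set_option maxHeartbeats 4000000 in
/-- **Proposition 3.2 (equivalence with nonlinear Beltrami systems).** -/
theorem stmt10 (h : ℂ → ℂ) (F : Set ℂ) (hF : IsCompact F)
    (w : E2 → E2) (L : ℝ≥0) (hLip : LipschitzOnWith L w B1)
    (hrange : essRange (fun x => confPart (Dmat w x)) B1 ⊆ F)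
    (heq : ∀ᵐ x ∂(volume.restrict B1), DifferentiableAt ℝ w x ∧
      anticonfPart (Dmat w x) = h (confPart (Dmat w x))) :
    SolvesDI w (KofH h F) B1 ∧
    (StrictlyContractiveOn h F → EllipticWithModulus (KofH h F)) ∧
    (∀ (w' : E2 → E2) (L' : ℝ≥0) (K' : Set M2), IsCompact K' → EllipticWithModulus K' →
      LipschitzOnWith L' w' B1 → SolvesDI w' K' B1 →
      ∃ h' : ℂ → ℂ, StrictlyContractiveOn h' (confPart '' K') ∧
        ∀ᵐ x ∂(volume.restrict B1),
          anticonfPart (Dmat w' x) = h' (confPart (Dmat w' x))) := by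
  refine ⟨?_, ?_, ?_⟩
  · -- Part 1
    have hae := ae_mem_essRange (fun x => confPart (Dmat w x)) B1
    filter_upwards [heq, hae] with x hx hmem
    obtain ⟨hdiff, hanti⟩ := hx
    refine ⟨hdiff, confPart (Dmat w x), hrange hmem, ?_⟩
    rw [← hanti, matOfConf_self]
  · -- Part 2
    rintro ⟨σ', hσ'm, hσ'Icc, hσ'pos, hσ'ineq⟩
    obtain ⟨C, hC⟩ := Metric.isBounded_iff.mp hF.isBounded
    set T : ℝ := max C 1 with hT
    have hT1 : (1:ℝ) ≤ T := le_max_right _ _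
    have hT0 : (0:ℝ) < T := lt_of_lt_of_le one_pos hT1
    set ψ : ℝ → ℝ := fun u => σ' (min (max u 0) (2*T) / 2) * (min (max u 0) (2*T))^2 / (8*T)
      with hψdef
    have hcnn : ∀ u : ℝ, 0 ≤ min (max u 0) (2*T) := fun u =>
      le_min (le_max_right _ _) (by positivity)
    have hcle : ∀ u : ℝ, min (max u 0) (2*T) ≤ 2*T := fun u => min_le_right _ _
    have hψmono : Monotone ψ := by
      intro u v huv
      have hc : min (max u 0) (2*T) ≤ min (max v 0) (2*T) :=
        min_le_min (max_le_max huv le_rfl) le_rfl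
      have h1 : σ' (min (max u 0) (2*T) / 2) ≤ σ' (min (max v 0) (2*T) / 2) :=
        hσ'm (by simpa using div_nonneg (hcnn u) (by norm_num))
          (by simpa using div_nonneg (hcnn v) (by norm_num)) (by linarith)
      have h2 : (min (max u 0) (2*T))^2 ≤ (min (max v 0) (2*T))^2 :=
        pow_le_pow_left₀ (hcnn u) hc 2
      have h3 : (0:ℝ) ≤ σ' (min (max u 0) (2*T) / 2) :=
        (hσ'Icc _ (by simpa using div_nonneg (hcnn u) (by norm_num))).1
      have h4 : (0:ℝ) ≤ σ' (min (max v 0) (2*T) / 2) :=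
        (hσ'Icc _ (by simpa using div_nonneg (hcnn v) (by norm_num))).1
      exact (div_le_div_iff_of_pos_right (by positivity)).mpr (mul_le_mul h1 h2 (by positivity) h4)
    have hψnn : ∀ u : ℝ, 0 ≤ ψ u := by
      intro u
      have h3 : (0:ℝ) ≤ σ' (min (max u 0) (2*T) / 2) :=
        (hσ'Icc (min (max u 0) (2*T) / 2) (by simpa using div_nonneg (hcnn u) (by norm_num))).1
      exact div_nonneg (mul_nonneg h3 (sq_nonneg _)) (by positivity)
    have hψpos : ∀ u : ℝ, 0 < u → 0 < ψ u := by
      intro u hu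
      have hmaxu : max u 0 = u := max_eq_left hu.le
      have hcpos : 0 < min (max u 0) (2*T) := by
        rw [hmaxu]; exact lt_min hu (by positivity)
      have := hσ'pos _ (by positivity : (0:ℝ) < min (max u 0) (2*T) / 2)
      positivity
    obtain ⟨hadm, hub⟩ := primitive_admissible ψ hψmono hψnn hψpos
    refine ⟨_, hadm, ?_⟩
    rintro X ⟨a, haF, rfl⟩ Y ⟨b, hbF, rfl⟩
    set t : ℝ := ‖a - b‖ with htdef
    set s : ℝ := ‖h a - h b‖ with hsdef
    have ht0 : 0 ≤ t := norm_nonneg _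
    have hs0 : 0 ≤ s := norm_nonneg _
    have htT : t ≤ T := by
      have := hC haF hbF
      rw [dist_eq_norm] at this
      exact this.trans (le_max_left _ _)
    have hu01 : σ' t ∈ Set.Icc (0:ℝ) 1 := hσ'Icc t ht0
    have hst : s ≤ (1 - σ' t) * t := hσ'ineq a haF b hbF
    have hsub : matOfConf a (h a) - matOfConf b (h b) = matOfConf (a - b) (h a - h b) :=
      matOfConf_sub a (h a) b (h b)
    have hdet : (matOfConf a (h a) - matOfConf b (h b)).det = t^2 - s^2 := by
      rw [hsub, det_eq_conf, confPart_matOfConf, anticonfPart_matOfConf]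
    have hmn : matNorm (matOfConf a (h a) - matOfConf b (h b)) ≤ 2*t := by
      rw [hsub, matNorm_eq, confPart_matOfConf, anticonfPart_matOfConf]
      have hs_le_t : s ≤ t := by nlinarith [hu01.1, hu01.2]
      calc Real.sqrt (2*(‖a - b‖^2 + ‖h a - h b‖^2)) ≤ Real.sqrt ((2*t)^2) := by
            apply Real.sqrt_le_sqrt; rw [← htdef, ← hsdef]; nlinarith
        _ = 2*t := Real.sqrt_sq (by positivity)
    have hmono := hadm.2.1.monotoneOn
    have hσm : (∫ u in (0:ℝ)..(matNorm (matOfConf a (h a) - matOfConf b (h b))), ψ u)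
        ≤ ∫ u in (0:ℝ)..(2*t), ψ u :=
      hmono (matNorm_nonneg _) (by positivity : (0:ℝ) ≤ 2*t) hmn
    have hψ2t : ψ (2*t) = σ' t * (2*t)^2 / (8*T) := by
      have h1 : max (2*t) 0 = 2*t := max_eq_left (by positivity)
      have h2 : min (2*t) (2*T) = 2*t := min_eq_left (by linarith)
      have h3 : 2*t/2 = t := by ring
      rw [hψdef]; simp only [h1, h2, h3]
    have hub2t : (∫ u in (0:ℝ)..(2*t), ψ u) ≤ σ' t * t^2 := by
      have := hub (2*t) (by positivity)
      rw [hψ2t] at this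
      have he : 2*t * (σ' t * (2*t)^2 / (8*T)) = σ' t * t^3 / T := by
        field_simp; ring
      have hTfac : σ' t * t^3 / T ≤ σ' t * t^2 := by
        rw [div_le_iff₀ hT0]
        nlinarith [mul_le_mul_of_nonneg_left htT (mul_nonneg hu01.1 (sq_nonneg t)), hu01.1]
      rw [he] at this
      linarith
    rw [hdet]
    have hs2 : s^2 ≤ ((1 - σ' t)*t)^2 := pow_le_pow_left₀ hs0 hst 2
    nlinarith [hσm, hub2t, hs2,
      mul_nonneg (mul_nonneg hu01.1 (sub_nonneg.mpr hu01.2)) (sq_nonneg t)]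
  · -- Part 3
    rintro w' L' K' hK'c ⟨σ, ⟨hσcont, hσsm, hσconv, hσ0, hσnn⟩, hell⟩ hLip' hDI
    have hσm := hσsm.monotoneOn
    -- conformal part determines anticonformal part on K'
    have anticonf_eq : ∀ X ∈ K', ∀ Y ∈ K', confPart X = confPart Y →
        anticonfPart X = anticonfPart Y := by
      intro X hX Y hY hconf
      have h1 := hell X hX Y hY
      rw [det_eq_conf, confPart_sub, anticonfPart_sub, hconf, sub_self] at h1
      simp only [norm_zero] at h1
      have h3 : 0 ≤ σ (matNorm (X - Y)) := hσnn _ (matNorm_nonneg _)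
      have h4 : ‖anticonfPart X - anticonfPart Y‖^2 ≤ 0 := by nlinarith
      have h5 : ‖anticonfPart X - anticonfPart Y‖ = 0 := by nlinarith [norm_nonneg (anticonfPart X - anticonfPart Y)]
      rw [norm_eq_zero, sub_eq_zero] at h5
      exact h5
    classical
    set h' : ℂ → ℂ := fun a =>
      if hx : ∃ X, X ∈ K' ∧ confPart X = a then anticonfPart hx.choose else 0 with hh'
    have h'_spec : ∀ X ∈ K', h' (confPart X) = anticonfPart X := by
      intro X hX
      have hx : ∃ Y, Y ∈ K' ∧ confPart Y = confPart X := ⟨X, hX, rfl⟩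
      rw [hh']
      simp only [dif_pos hx]
      exact anticonf_eq _ hx.choose_spec.1 _ hX hx.choose_spec.2
    clear_value h'
    obtain ⟨C, hC⟩ := Metric.isBounded_iff.mp (hK'c.image continuous_confPart).isBounded
    set T : ℝ := max C 0 + 1 with hTdef
    have hT0 : (0:ℝ) < T := by positivity
    set σt : ℝ → ℝ := fun t => min 1 (σ (min t T) / (2*T^2)) with hσt
    refine ⟨h', ⟨σt, ?_, ?_, ?_, ?_⟩, ?_⟩
    · -- MonotoneOn
      intro u hu v hv huv
      have h1 : σ (min u T) ≤ σ (min v T) :=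
        hσm (le_min hu hT0.le) (le_min hv hT0.le) (min_le_min huv le_rfl)
      exact min_le_min le_rfl (div_le_div_of_nonneg_right h1 (by positivity) |>.trans_eq rfl)
    · -- Icc 0 1
      intro u hu
      refine ⟨le_min zero_le_one ?_, min_le_left _ _⟩
      have := hσnn (min u T) (le_min hu hT0.le)
      positivity
    · -- positivity
      intro u hu
      have h1 : 0 < min u T := lt_min hu hT0
      have h2 : σ 0 < σ (min u T) := hσsm (le_refl (0:ℝ)) (le_min hu.le hT0.le) h1
      rw [hσ0] at h2
      exact lt_min one_pos (by positivity)
    · -- contraction estimate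
      rintro a ⟨X, hX, rfl⟩ b ⟨Y, hY, rfl⟩
      rw [h'_spec X hX, h'_spec Y hY]
      set t : ℝ := ‖confPart X - confPart Y‖ with htdef
      set d : ℝ := ‖anticonfPart X - anticonfPart Y‖ with hddef
      have ht0 : 0 ≤ t := norm_nonneg _
      have hd0 : 0 ≤ d := norm_nonneg _
      have h1 : σ (matNorm (X - Y)) ≤ t^2 - d^2 := by
        have := hell X hX Y hY
        rwa [det_eq_conf, confPart_sub, anticonfPart_sub] at this
      have h2 : t ≤ matNorm (X - Y) := by
        rw [htdef, ← confPart_sub]; exact conf_le_matNorm _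
      have h3 : σ t ≤ σ (matNorm (X - Y)) := hσm ht0 (matNorm_nonneg _) h2
      have hd2 : d^2 ≤ t^2 - σ t := by linarith
      have hσtnn : 0 ≤ σ t := hσnn t ht0
      have htT : t ≤ T := by
        have h6 := hC ⟨X, hX, rfl⟩ ⟨Y, hY, rfl⟩
        rw [dist_eq_norm, ← htdef] at h6
        rw [hTdef]
        calc t ≤ C := h6
          _ ≤ max C 0 := le_max_left _ _
          _ ≤ max C 0 + 1 := by linarith
      clear_value t d T σt
      clear anticonf_eq hh' heq hrange hLip hLip' hDI hell hσcont hσconv hC h'_spec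
      rcases eq_or_lt_of_le ht0 with h0 | htpos
      · -- t = 0
        have ht : t = 0 := h0.symm
        have hσt0 : σ t = 0 := by rw [ht, hσ0]
        have hd' : d^2 = 0 := le_antisymm (by nlinarith) (sq_nonneg d)
        have : d = 0 := by
          have := pow_eq_zero_iff (by norm_num : (2:ℕ) ≠ 0) |>.mp hd'
          exact this
        rw [this, ht]; simp
      · -- t > 0
        have hminT : min t T = t := min_eq_left htT
        have htne : t ≠ 0 := ne_of_gt htpos
        have hq : σ t ≤ t^2 := by linarith [hd2, sq_nonneg d]
        set R : ℝ := t - σ t / (2*t) with hRdef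
        have hR0 : 0 ≤ R := by
          rw [hRdef]
          rw [sub_nonneg, div_le_iff₀ (by positivity : (0:ℝ) < 2*t)]
          nlinarith
        have hexp : (2*t)^2 * (R^2 - (t^2 - σ t)) = (σ t)^2 := by
          rw [hRdef]; field_simp; ring
        have hexp2 : t^2 - σ t ≤ R^2 := by
          nlinarith [hexp, sq_nonneg (σ t), mul_pos htpos htpos]
        have hRsq : d^2 ≤ R^2 := hd2.trans hexp2
        have hdR : d ≤ R := le_of_pow_le_pow_left₀ (by norm_num : (2:ℕ) ≠ 0) hR0 hRsq
        have hs1 : σt t ≤ σ t / (2*T^2) := by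
          rw [hσt]; simp only [hminT]; exact min_le_right _ _
        have h2t2 : (0:ℝ) < 2*t^2 := by nlinarith
        have h2T2 : 2*t^2 ≤ 2*T^2 := by nlinarith
        have hs2 : σ t / (2*T^2) ≤ σ t / (2*t^2) :=
          div_le_div_of_nonneg_left hσtnn h2t2 h2T2
        have hs3 : (1 - σ t / (2*t^2)) * t = R := by
          rw [hRdef]; field_simp
        have hfinal : R ≤ (1 - σt t) * t := by
          rw [← hs3]
          apply mul_le_mul_of_nonneg_right _ ht0
          have := hs1.trans hs2
          linarith
        linarith
    · -- a.e. identity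
      filter_upwards [hDI] with x hx
      exact (h'_spec _ hx.2).symm
end
end

section
/- Let K ⊆ ℝ^{2×2} be compact and elliptic-with-modulus. Then there exists a nondecreasing function ω : [0,∞) → [0,∞) with ω(0) = 0 and ω(t) > 0 for all t > 0 such that, for every Borel probability measure μ on ℝ^{2×2} supported in K, ∫ det(X) dμ(X) − det( ∫ X dμ(X) ) ≥ ω( ∫ |X − ∫ Y dμ(Y)|² dμ(X) ). -/
open MeasureTheory Metric Set Filter
open scoped Topology NNReal ENNReal RealInnerProductSpace

noncomputable section

instance : MeasurableSpace M2 := inferInstanceAs (MeasurableSpace (Fin 2 → Fin 2 → ℝ))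
instance : NormedAddCommGroup M2 := inferInstanceAs (NormedAddCommGroup (Fin 2 → Fin 2 → ℝ))
instance : NormedSpace ℝ M2 := inferInstanceAs (NormedSpace ℝ (Fin 2 → Fin 2 → ℝ))


/-! ### Auxiliary lemmas for the proof -/

instance : BorelSpace M2 := inferInstanceAs (BorelSpace (Fin 2 → Fin 2 → ℝ))

lemma aux_matNorm_sq' (A : M2) :
    matNorm A ^ 2 = A 0 0 ^ 2 + A 0 1 ^ 2 + A 1 0 ^ 2 + A 1 1 ^ 2 := by
  rw [matNorm, Real.sq_sqrt (by positivity)]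
  simp [Fin.sum_univ_two]; ring

lemma aux_matNorm_le (A : M2) : matNorm A ≤ 2 * ‖A‖ := by
  have hb : ∀ i j, |A i j| ≤ ‖A‖ := fun i j =>
    (norm_le_pi_norm (A i) j).trans (norm_le_pi_norm A i)
  have h2 : ∀ i j, (A i j) ^ 2 ≤ ‖A‖ ^ 2 := fun i j => by
    rw [← sq_abs]; exact pow_le_pow_left₀ (abs_nonneg _) (hb i j) 2
  have h3 : matNorm A ^ 2 ≤ (2 * ‖A‖) ^ 2 := by
    rw [aux_matNorm_sq']; nlinarith [h2 0 0, h2 0 1, h2 1 0, h2 1 1, norm_nonneg A]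
  nlinarith [Real.sqrt_nonneg (∑ i, ∑ j, (A i j) ^ 2), norm_nonneg A,
    (rfl : matNorm A = Real.sqrt (∑ i, ∑ j, (A i j) ^ 2))]

lemma aux_cont_entry (i j : Fin 2) : Continuous fun X : M2 => X i j :=
  (continuous_apply j).comp (continuous_apply i)

lemma aux_cont_det : Continuous fun X : M2 => X.det := by
  have h : (fun X : M2 => X.det) = fun X : M2 => X 0 0 * X 1 1 - X 0 1 * X 1 0 :=
    funext fun X => Matrix.det_fin_two X
  rw [h]; fun_prop

lemma aux_cont_matNormSq : Continuous fun A : M2 => matNorm A ^ 2 := by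
  have h : (fun A : M2 => matNorm A ^ 2)
      = fun A : M2 => A 0 0 ^ 2 + A 0 1 ^ 2 + A 1 0 ^ 2 + A 1 1 ^ 2 :=
    funext fun A => aux_matNorm_sq' A
  rw [h]; fun_prop

lemma aux_integrable_cont {K : Set M2} (hK : IsCompact K) (μ : Measure M2)
    [IsProbabilityMeasure μ] (hμK : ∀ᵐ X ∂μ, X ∈ K) {E : Type*} [NormedAddCommGroup E]
    {f : M2 → E} (hf : Continuous f) : Integrable f μ := by
  obtain ⟨C, hC⟩ := hK.exists_bound_of_continuousOn hf.continuousOn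
  exact Integrable.mono' (integrable_const C) hf.aestronglyMeasurable
    (hμK.mono fun x hx => hC x hx)

set_option maxHeartbeats 1000000 in
lemma aux_key (K : Set M2) (hK : IsCompact K) (σ : ℝ → ℝ)
    (hσm : MonotoneOn σ (Set.Ici 0)) (hσnn : ∀ t ∈ Set.Ici (0 : ℝ), 0 ≤ σ t)
    (hKσ : ∀ X ∈ K, ∀ Y ∈ K, σ (matNorm (X - Y)) ≤ (X - Y).det)
    (D : ℝ) (hD : 0 < D) (hDK : ∀ X ∈ K, ∀ Y ∈ K, matNorm (X - Y) ≤ D)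
    (μ : Measure M2) [IsProbabilityMeasure μ] (hμK : ∀ᵐ X ∂μ, X ∈ K) :
    σ (Real.sqrt (∫ X, (matNorm (X - ∫ Y, Y ∂μ)) ^ 2 ∂μ)) *
      (∫ X, (matNorm (X - ∫ Y, Y ∂μ)) ^ 2 ∂μ) / (2 * D ^ 2) ≤
      (∫ X, X.det ∂μ) - (∫ X, X ∂μ).det := by
  have hIid : Integrable (fun X : M2 => X) μ :=
    aux_integrable_cont hK μ hμK continuous_id
  have hCont : ∀ {f : M2 → ℝ}, Continuous f → Integrable f μ :=
    fun hf => aux_integrable_cont hK μ hμK hf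
  have hent : ∀ i j, Integrable (fun X : M2 => X i j) μ :=
    fun i j => hCont (aux_cont_entry i j)
  have hMij : ∀ i j, (∫ X, X ∂μ) i j = ∫ X, X i j ∂μ := by
    intro i j
    have h1 : (∫ X, X ∂μ) i = ∫ X, X i ∂μ :=
      ((ContinuousLinearMap.proj (R := ℝ) (φ := fun _ : Fin 2 => Fin 2 → ℝ)
        i).integral_comp_comm hIid).symm
    have hI2 : Integrable (fun X : M2 => X i) μ :=
      (ContinuousLinearMap.proj (R := ℝ) (φ := fun _ : Fin 2 => Fin 2 → ℝ)
        i).integrable_comp hIid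
    rw [h1]
    exact ((ContinuousLinearMap.proj (R := ℝ) (φ := fun _ : Fin 2 => ℝ)
      j).integral_comp_comm hI2).symm
  set M : M2 := ∫ X, X ∂μ with hMdef
  set m00 : ℝ := ∫ X, X 0 0 ∂μ with hm00
  set m01 : ℝ := ∫ X, X 0 1 ∂μ with hm01
  set m10 : ℝ := ∫ X, X 1 0 ∂μ with hm10
  set m11 : ℝ := ∫ X, X 1 1 ∂μ with hm11
  set dd : ℝ := ∫ y, (y 0 0 * y 1 1 - y 0 1 * y 1 0) ∂μ with hdd
  set ss : ℝ := ∫ y, (y 0 0 ^ 2 + y 0 1 ^ 2 + y 1 0 ^ 2 + y 1 1 ^ 2) ∂μ with hss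
  set V : ℝ := ∫ X, (matNorm (X - M)) ^ 2 ∂μ with hV
  have hsqhead : Integrable (fun y : M2 => y 0 0 ^ 2 + y 0 1 ^ 2 + y 1 0 ^ 2 + y 1 1 ^ 2) μ :=
    hCont (by fun_prop)
  have hdethead : Integrable (fun y : M2 => y 0 0 * y 1 1 - y 0 1 * y 1 0) μ :=
    hCont (by fun_prop)
  -- generic splitting of integrals of "head + linear + constant"
  have genF : ∀ (f : M2 → ℝ), Integrable f μ → ∀ c00 c01 c10 c11 e : ℝ,
      ∫ y, (f y + (c00 * y 0 0 + c01 * y 0 1 + c10 * y 1 0 + c11 * y 1 1) + e) ∂μ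
        = (∫ y, f y ∂μ) + (c00 * m00 + c01 * m01 + c10 * m10 + c11 * m11) + e := by
    intro f hf c00 c01 c10 c11 e
    have hA : Integrable (fun y : M2 => c00 * y 0 0) μ := hCont (by fun_prop)
    have hB : Integrable (fun y : M2 => c01 * y 0 1) μ := hCont (by fun_prop)
    have hCc : Integrable (fun y : M2 => c10 * y 1 0) μ := hCont (by fun_prop)
    have hDd : Integrable (fun y : M2 => c11 * y 1 1) μ := hCont (by fun_prop)
    have hAB : Integrable (fun y : M2 => c00 * y 0 0 + c01 * y 0 1) μ := hCont (by fun_prop)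
    have hABC : Integrable (fun y : M2 => c00 * y 0 0 + c01 * y 0 1 + c10 * y 1 0) μ :=
      hCont (by fun_prop)
    have hL : Integrable
        (fun y : M2 => c00 * y 0 0 + c01 * y 0 1 + c10 * y 1 0 + c11 * y 1 1) μ :=
      hCont (by fun_prop)
    have hfL : Integrable
        (fun y : M2 => f y + (c00 * y 0 0 + c01 * y 0 1 + c10 * y 1 0 + c11 * y 1 1)) μ :=
      by exact hf.add hL
    rw [integral_add hfL (integrable_const e),
        integral_add hf hL,
        integral_add hABC hDd,
        integral_add hAB hCc,
        integral_add hA hB,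
        integral_const_mul, integral_const_mul, integral_const_mul, integral_const_mul,
        integral_const]
    simp [← hm00, ← hm01, ← hm10, ← hm11]
  -- inner integral identities
  have hQ : ∀ a : M2, ∫ y, (matNorm (a - y)) ^ 2 ∂μ
      = ss + ((-2 * a 0 0) * m00 + (-2 * a 0 1) * m01 + (-2 * a 1 0) * m10
          + (-2 * a 1 1) * m11)
        + (a 0 0 ^ 2 + a 0 1 ^ 2 + a 1 0 ^ 2 + a 1 1 ^ 2) := by
    intro a
    have e : (fun y : M2 => (matNorm (a - y)) ^ 2)
        = fun y => (y 0 0 ^ 2 + y 0 1 ^ 2 + y 1 0 ^ 2 + y 1 1 ^ 2)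
            + ((-2 * a 0 0) * y 0 0 + (-2 * a 0 1) * y 0 1 + (-2 * a 1 0) * y 1 0
                + (-2 * a 1 1) * y 1 1)
            + (a 0 0 ^ 2 + a 0 1 ^ 2 + a 1 0 ^ 2 + a 1 1 ^ 2) := by
      funext y; simp only [aux_matNorm_sq', Matrix.sub_apply]; ring
    rw [e, genF _ hsqhead, ← hss]
  have hP : ∀ a : M2, ∫ y, (a - y).det ∂μ
      = dd + ((-(a 1 1)) * m00 + a 1 0 * m01 + a 0 1 * m10 + (-(a 0 0)) * m11)
        + (a 0 0 * a 1 1 - a 0 1 * a 1 0) := by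
    intro a
    have e : (fun y : M2 => (a - y).det)
        = fun y => (y 0 0 * y 1 1 - y 0 1 * y 1 0)
            + ((-(a 1 1)) * y 0 0 + a 1 0 * y 0 1 + a 0 1 * y 1 0 + (-(a 0 0)) * y 1 1)
            + (a 0 0 * a 1 1 - a 0 1 * a 1 0) := by
      funext y; simp only [Matrix.det_fin_two, Matrix.sub_apply]; ring
    rw [e, genF _ hdethead, ← hdd]
  have hV0 : 0 ≤ V := by
    rw [hV]; exact integral_nonneg fun x => by positivity
  have hVeq : V = ss - (m00 ^ 2 + m01 ^ 2 + m10 ^ 2 + m11 ^ 2) := by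
    have e : (fun X : M2 => (matNorm (X - M)) ^ 2) = fun X => (matNorm (M - X)) ^ 2 := by
      funext X; simp only [aux_matNorm_sq', Matrix.sub_apply]; ring
    rw [hV, e, hQ M, hMij 0 0, hMij 0 1, hMij 1 0, hMij 1 1,
        ← hm00, ← hm01, ← hm10, ← hm11]
    ring
  set c : ℝ := σ (Real.sqrt V) / D ^ 2 with hc
  have hc0 : 0 ≤ c := div_nonneg (hσnn _ (Real.sqrt_nonneg V)) (by positivity)
  have hpt : ∀ x ∈ K, ∀ y ∈ K, c * ((matNorm (x - y)) ^ 2 - V) ≤ (x - y).det := by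
    intro x hx y hy
    have h1 := hKσ x hx y hy
    have hn : 0 ≤ matNorm (x - y) := Real.sqrt_nonneg _
    have hσn : 0 ≤ σ (matNorm (x - y)) := hσnn _ hn
    have hDxy := hDK x hx y hy
    rcases le_or_gt (Real.sqrt V) (matNorm (x - y)) with hcase | hcase
    · have h2 : σ (Real.sqrt V) ≤ σ (matNorm (x - y)) :=
        hσm (Real.sqrt_nonneg V) hn hcase
      have h3 : (matNorm (x - y)) ^ 2 - V ≤ D ^ 2 := by nlinarith
      have h4 : c * ((matNorm (x - y)) ^ 2 - V) ≤ c * D ^ 2 :=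
        mul_le_mul_of_nonneg_left h3 hc0
      have h5 : c * D ^ 2 = σ (Real.sqrt V) := by
        rw [hc]; field_simp
      linarith
    · have h3 : (matNorm (x - y)) ^ 2 < V := by
        nlinarith [Real.sq_sqrt hV0, Real.sqrt_nonneg V]
      nlinarith [mul_nonneg hc0 (le_of_lt (sub_pos.2 h3))]
  -- a.e. comparison of the inner integrals, expressed through explicit polynomials
  have hinner : ∀ᵐ x ∂μ,
      c * ((ss + ((-2 * x 0 0) * m00 + (-2 * x 0 1) * m01 + (-2 * x 1 0) * m10
          + (-2 * x 1 1) * m11)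
        + (x 0 0 ^ 2 + x 0 1 ^ 2 + x 1 0 ^ 2 + x 1 1 ^ 2)) - V)
      ≤ dd + ((-(x 1 1)) * m00 + x 1 0 * m01 + x 0 1 * m10 + (-(x 0 0)) * m11)
        + (x 0 0 * x 1 1 - x 0 1 * x 1 0) := by
    filter_upwards [hμK] with x hx
    rw [← hQ x, ← hP x]
    have hF : Integrable (fun y : M2 => (matNorm (x - y)) ^ 2) μ :=
      hCont (aux_cont_matNormSq.comp (continuous_const.sub continuous_id))
    have hint1 : Integrable (fun y : M2 => c * ((matNorm (x - y)) ^ 2 - V)) μ :=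
      (hF.sub (integrable_const V)).const_mul c
    have hint2 : Integrable (fun y : M2 => (x - y).det) μ :=
      hCont (aux_cont_det.comp (continuous_const.sub continuous_id))
    have hmono := integral_mono_ae hint1 hint2 (hμK.mono fun y hy => hpt x hx y hy)
    have hls : ∫ y, c * ((matNorm (x - y)) ^ 2 - V) ∂μ
        = c * ((∫ y, (matNorm (x - y)) ^ 2 ∂μ) - V) := by
      rw [integral_const_mul, integral_sub hF (integrable_const V), integral_const]
      simp
    rwa [hls] at hmono
  -- integrate the comparison
  have hLint : Integrable (fun x : M2 =>
      c * ((ss + ((-2 * x 0 0) * m00 + (-2 * x 0 1) * m01 + (-2 * x 1 0) * m10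
          + (-2 * x 1 1) * m11)
        + (x 0 0 ^ 2 + x 0 1 ^ 2 + x 1 0 ^ 2 + x 1 1 ^ 2)) - V)) μ :=
    hCont (by fun_prop)
  have hRint : Integrable (fun x : M2 =>
      dd + ((-(x 1 1)) * m00 + x 1 0 * m01 + x 0 1 * m10 + (-(x 0 0)) * m11)
        + (x 0 0 * x 1 1 - x 0 1 * x 1 0)) μ :=
    hCont (by fun_prop)
  have houter := integral_mono_ae hLint hRint hinner
  -- compute both outer integrals
  have hLeq : ∫ x, (fun x : M2 =>
      c * ((ss + ((-2 * x 0 0) * m00 + (-2 * x 0 1) * m01 + (-2 * x 1 0) * m10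
          + (-2 * x 1 1) * m11)
        + (x 0 0 ^ 2 + x 0 1 ^ 2 + x 1 0 ^ 2 + x 1 1 ^ 2)) - V)) x ∂μ
      = c * ss + ((c * (-2 * m00)) * m00 + (c * (-2 * m01)) * m01
          + (c * (-2 * m10)) * m10 + (c * (-2 * m11)) * m11) + (c * (ss - V)) := by
    have e : (fun x : M2 =>
        c * ((ss + ((-2 * x 0 0) * m00 + (-2 * x 0 1) * m01 + (-2 * x 1 0) * m10
            + (-2 * x 1 1) * m11)
          + (x 0 0 ^ 2 + x 0 1 ^ 2 + x 1 0 ^ 2 + x 1 1 ^ 2)) - V))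
        = fun x : M2 => (c * (x 0 0 ^ 2 + x 0 1 ^ 2 + x 1 0 ^ 2 + x 1 1 ^ 2))
            + ((c * (-2 * m00)) * x 0 0 + (c * (-2 * m01)) * x 0 1
              + (c * (-2 * m10)) * x 1 0 + (c * (-2 * m11)) * x 1 1)
            + (c * (ss - V)) := by
      funext x; ring
    have hcsq : Integrable (fun x : M2 => c * (x 0 0 ^ 2 + x 0 1 ^ 2 + x 1 0 ^ 2 + x 1 1 ^ 2)) μ :=
      hCont (by fun_prop)
    rw [e, genF _ hcsq, integral_const_mul, ← hss]
  have hReq : ∫ x, (fun x : M2 =>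
      dd + ((-(x 1 1)) * m00 + x 1 0 * m01 + x 0 1 * m10 + (-(x 0 0)) * m11)
        + (x 0 0 * x 1 1 - x 0 1 * x 1 0)) x ∂μ
      = dd + ((-m11) * m00 + m10 * m01 + m01 * m10 + (-m00) * m11) + dd := by
    have e : (fun x : M2 =>
        dd + ((-(x 1 1)) * m00 + x 1 0 * m01 + x 0 1 * m10 + (-(x 0 0)) * m11)
          + (x 0 0 * x 1 1 - x 0 1 * x 1 0))
        = fun x : M2 => (x 0 0 * x 1 1 - x 0 1 * x 1 0)
            + ((-m11) * x 0 0 + m10 * x 0 1 + m01 * x 1 0 + (-m00) * x 1 1) + dd := by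
      funext x; ring
    rw [e, genF _ hdethead, ← hdd]
  rw [hLeq, hReq] at houter
  -- final assembly
  have hMdet : M.det = m00 * m11 - m01 * m10 := by
    rw [Matrix.det_fin_two, hMij 0 0, hMij 0 1, hMij 1 0, hMij 1 1,
        ← hm00, ← hm01, ← hm10, ← hm11]
  have hd : ∫ X, X.det ∂μ = dd := by
    rw [hdd]; congr 1; funext X; exact Matrix.det_fin_two X
  have hfinal : c * V ≤ 2 * ((∫ X, X.det ∂μ) - M.det) := by
    rw [hd, hMdet]; nlinarith [houter, hVeq]
  have hσc : σ (Real.sqrt V) = c * D ^ 2 := by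
    rw [hc]; field_simp
  rw [hσc]
  have heq : c * D ^ 2 * V / (2 * D ^ 2) = c * V / 2 := by
    field_simp
  rw [heq]
  linarith

set_option maxHeartbeats 1000000 in
/-- **Lemma 8.2 (quantitative Jensen-type inequality for elliptic sets).** -/
theorem stmt12 (K : Set M2) (hK : IsCompact K) (hell : EllipticWithModulus K) :
    ∃ ω : ℝ → ℝ, MonotoneOn ω (Set.Ici 0) ∧ ω 0 = 0 ∧ (∀ t : ℝ, 0 < t → 0 < ω t) ∧
      (∀ t ∈ Set.Ici (0 : ℝ), 0 ≤ ω t) ∧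
      ∀ μ : Measure M2, IsProbabilityMeasure μ → (∀ᵐ X ∂μ, X ∈ K) →
        ω (∫ X, (matNorm (X - ∫ Y, Y ∂μ)) ^ 2 ∂μ) ≤
          (∫ X, X.det ∂μ) - (∫ X, X ∂μ).det := by
  obtain ⟨σ, ⟨hcont, hsm, hconv, hσ0, hσnn⟩, hKσ⟩ := hell
  have hσm : MonotoneOn σ (Set.Ici 0) := hsm.monotoneOn
  obtain ⟨R, hR⟩ := isBounded_iff_forall_norm_le.1 hK.isBounded
  set D : ℝ := 4 * max R 0 + 1 with hDdef
  have hD : 0 < D := by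
    have := le_max_right R 0; rw [hDdef]; nlinarith
  have hDK : ∀ X ∈ K, ∀ Y ∈ K, matNorm (X - Y) ≤ D := by
    intro X hX Y hY
    have h1 : matNorm (X - Y) ≤ 2 * ‖X - Y‖ := aux_matNorm_le _
    have h2 : ‖X - Y‖ ≤ ‖X‖ + ‖Y‖ := norm_sub_le X Y
    have h3 := hR X hX
    have h4 := hR Y hY
    have h5 : ‖X‖ ≤ max R 0 := h3.trans (le_max_left R 0)
    have h6 : ‖Y‖ ≤ max R 0 := h4.trans (le_max_left R 0)
    rw [hDdef]; nlinarith
  refine ⟨fun t => if t ≤ 0 then 0 else σ (Real.sqrt t) * t / (2 * D ^ 2),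
    ?_, ?_, ?_, ?_, ?_⟩
  · -- monotone
    intro s hs t ht hst
    dsimp only
    by_cases hs0 : s ≤ 0
    · rw [if_pos hs0]
      split_ifs with h
      · exact le_rfl
      · have ht0 : 0 ≤ t := (not_le.1 h).le
        have : 0 ≤ σ (Real.sqrt t) := hσnn _ (Real.sqrt_nonneg t)
        positivity
    · have ht0 : ¬ t ≤ 0 := fun h => hs0 (hst.trans h)
      rw [if_neg hs0, if_neg ht0]
      have hs' : 0 < s := not_le.1 hs0
      have h1 : σ (Real.sqrt s) ≤ σ (Real.sqrt t) :=
        hσm (Real.sqrt_nonneg s) (Real.sqrt_nonneg t) (Real.sqrt_le_sqrt hst)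
      have h2 : 0 ≤ σ (Real.sqrt s) := hσnn _ (Real.sqrt_nonneg s)
      have h3 : σ (Real.sqrt s) * s ≤ σ (Real.sqrt t) * t :=
        mul_le_mul h1 hst hs'.le (hσnn _ (Real.sqrt_nonneg t))
      have hpos : (0 : ℝ) < 2 * D ^ 2 := by positivity
      rw [div_le_div_iff₀ hpos hpos]
      nlinarith
  · simp
  · intro t ht
    dsimp only
    rw [if_neg (not_le.2 ht)]
    have h1 : 0 < σ (Real.sqrt t) := by
      have := hsm (Set.mem_Ici.2 le_rfl) (Set.mem_Ici.2 (Real.sqrt_nonneg t))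
        (Real.sqrt_pos.2 ht)
      rwa [hσ0] at this
    positivity
  · intro t ht
    dsimp only
    split_ifs with h
    · exact le_rfl
    · have ht0 : 0 ≤ t := ht
      have : 0 ≤ σ (Real.sqrt t) := hσnn _ (Real.sqrt_nonneg t)
      positivity
  · intro μ hμ hμK
    dsimp only
    have hkey := aux_key K hK σ hσm hσnn hKσ D hD hDK μ hμK
    set V : ℝ := ∫ X, (matNorm (X - ∫ Y, Y ∂μ)) ^ 2 ∂μ with hV
    have hV0 : 0 ≤ V := by
      rw [hV]; exact integral_nonneg fun x => by positivity
    by_cases hle : V ≤ 0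
    · rw [if_pos hle]
      have hVz : V = 0 := le_antisymm hle hV0
      calc (0 : ℝ) = σ (Real.sqrt V) * V / (2 * D ^ 2) := by rw [hVz]; simp
        _ ≤ _ := hkey
    · rw [if_neg hle]
      exact hkey
end
end
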